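/- Let σ, ν, μ be Minkowski velocities with ⟨ν,σ⟩ > 0, ⟨μ,σ⟩ > 0 and ⟨μ,ν⟩ > 0. Set ω₀₁ := ω(σ,ν), ω₀₂ := ω(σ,μ) and γ₀₁ := 1/√(1 + ⟨ω₀₁,ω₀₁⟩/c²). Then the 4D Einstein subtraction of these binary velocities, ε := [ω₀₂ − ω₀₁ + (γ₀₁/(γ₀₁+1))·((⟨ω₀₁,ω₀₁⟩/c²)·ω₀₂ − (⟨ω₀₂,ω₀₁⟩/c²)·ω₀₁)] / (1 + ⟨ω₀₂,ω₀₁⟩/c²), satisfies ε = (c²/⟨μ,ν⟩)·[μ − (⟨μ,ν+σ⟩/⟨σ,ν+σ⟩)·(ν + σ)] + σ. -/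

import Mathlib

/-!
Write `A = ⟨σ,ν⟩`, `B = ⟨σ,μ⟩`, `D = ⟨μ,ν⟩`. Bilinearity and `⟨σ,σ⟩ = c²` give
`⟨ω(σ,μ), ω(σ,ν)⟩ = c⁴D/(AB) − c²`, so with `⟨ν,ν⟩ = c²` the Lorentz factor is `γ₀₁ = A/c²`.
After these substitutions both sides of the identity are explicit combinations of `μ`, `ν`, `σ`,
and their coefficients agree as rational functions of `c, A, B, D`.
-/

noncomputable section

/-- Minkowski bilinear form on ℝ⁴ with signature +−−−. -/
def mink (u v : Fin 4 → ℝ) : ℝ := u 0 * v 0 - u 1 * v 1 - u 2 * v 2 - u 3 * v 3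

/-- Canonical (Oziewicz–Świerk–Bolós) binary relative velocity of μ with respect to ν. -/
def omegaBin (c : ℝ) (ν μ : Fin 4 → ℝ) : Fin 4 → ℝ := (c ^ 2 / mink ν μ) • μ - ν

section Mink

variable (u v w : Fin 4 → ℝ) (a : ℝ)

lemma mink_comm : mink u v = mink v u := by
  simp only [mink]; ring

lemma mink_add_right : mink u (v + w) = mink u v + mink u w := by
  simp only [mink, Pi.add_apply]; ring

lemma mink_sub_left : mink (u - v) w = mink u w - mink v w := by
  simp only [mink, Pi.sub_apply]; ring

lemma mink_sub_right : mink u (v - w) = mink u v - mink u w := by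
  simp only [mink, Pi.sub_apply]; ring

lemma mink_smul_left : mink (a • u) v = a * mink u v := by
  simp only [mink, Pi.smul_apply, smul_eq_mul]; ring

lemma mink_smul_right : mink u (a • v) = a * mink u v := by
  simp only [mink, Pi.smul_apply, smul_eq_mul]; ring

end Mink

section OmegaBin

variable {c : ℝ} {σ ν μ : Fin 4 → ℝ}

lemma mink_omegaBin_omegaBin (hσ : mink σ σ = c ^ 2) (hσμ : mink σ μ ≠ 0)
    (hσν : mink σ ν ≠ 0) :
    mink (omegaBin c σ μ) (omegaBin c σ ν)
      = c ^ 4 * mink μ ν / (mink σ μ * mink σ ν) - c ^ 2 := by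
  simp only [omegaBin, mink_sub_left, mink_sub_right, mink_smul_left, mink_smul_right,
    mink_comm μ σ, hσ]
  field_simp
  ring

lemma inv_sqrt_one_add_mink_omegaBin_self (hc : c ≠ 0) (hσ : mink σ σ = c ^ 2)
    (hν : mink ν ν = c ^ 2) (hσν : 0 < mink σ ν) :
    1 / Real.sqrt (1 + mink (omegaBin c σ ν) (omegaBin c σ ν) / c ^ 2) = mink σ ν / c ^ 2 := by
  have hsq : 1 + mink (omegaBin c σ ν) (omegaBin c σ ν) / c ^ 2 = (c ^ 2 / mink σ ν) ^ 2 := by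
    rw [mink_omegaBin_omegaBin hσ hσν.ne' hσν.ne', hν]
    field_simp
    ring
  rw [hsq, Real.sqrt_sq (by positivity), one_div_div]

end OmegaBin

theorem einstein_oziewicz_velocity_general (c : ℝ) (hc : 0 < c) (σ ν μ : Fin 4 → ℝ)
    (hσ : mink σ σ = c ^ 2) (hν : mink ν ν = c ^ 2)
    (hνσ : 0 < mink ν σ) (hμσ : 0 < mink μ σ) (hμν : 0 < mink μ ν)
    (ω01 ω02 : Fin 4 → ℝ)
    (hω01 : ω01 = omegaBin c σ ν) (hω02 : ω02 = omegaBin c σ μ)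
    (γ01 : ℝ) (hγ01 : γ01 = 1 / Real.sqrt (1 + mink ω01 ω01 / c ^ 2))
    (ε : Fin 4 → ℝ)
    (hε : ε = (1 + mink ω02 ω01 / c ^ 2)⁻¹ •
        (ω02 - ω01 + (γ01 / (γ01 + 1)) •
          ((mink ω01 ω01 / c ^ 2) • ω02 - (mink ω02 ω01 / c ^ 2) • ω01))) :
    ε = (c ^ 2 / mink μ ν) •
          (μ - (mink μ (ν + σ) / mink σ (ν + σ)) • (ν + σ)) + σ := by
  rw [mink_comm] at hνσ hμσ
  have hγ : γ01 = mink σ ν / c ^ 2 := by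
    rw [hγ01, hω01, inv_sqrt_one_add_mink_omegaBin_self hc.ne' hσ hν hνσ]
  subst hε hω01 hω02 hγ
  rw [mink_omegaBin_omegaBin hσ hμσ.ne' hνσ.ne', mink_omegaBin_omegaBin hσ hνσ.ne' hνσ.ne',
    hν, mink_add_right, mink_add_right, hσ, mink_comm μ σ]
  unfold omegaBin
  match_scalars <;> field_simp <;> ring

theorem einstein_oziewicz_velocity (c : ℝ) (hc : 0 < c) (σ ν μ : Fin 4 → ℝ)
    (hσ : mink σ σ = c ^ 2) (hν : mink ν ν = c ^ 2) (hμ : mink μ μ = c ^ 2)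
    (hνσ : 0 < mink ν σ) (hμσ : 0 < mink μ σ) (hμν : 0 < mink μ ν)
    (ω01 ω02 : Fin 4 → ℝ)
    (hω01 : ω01 = omegaBin c σ ν) (hω02 : ω02 = omegaBin c σ μ)
    (γ01 : ℝ) (hγ01 : γ01 = 1 / Real.sqrt (1 + mink ω01 ω01 / c ^ 2))
    (ε : Fin 4 → ℝ)
    (hε : ε = (1 + mink ω02 ω01 / c ^ 2)⁻¹ •
        (ω02 - ω01 + (γ01 / (γ01 + 1)) •
          ((mink ω01 ω01 / c ^ 2) • ω02 - (mink ω02 ω01 / c ^ 2) • ω01))) :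
    ε = (c ^ 2 / mink μ ν) •
          (μ - (mink μ (ν + σ) / mink σ (ν + σ)) • (ν + σ)) + σ :=
  einstein_oziewicz_velocity_general c hc σ ν μ hσ hν hνσ hμσ hμν ω01 ω02 hω01 hω02 γ01 hγ01 ε hε
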